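/- Let h(x) = E[f(x+G)] where f: ℝⁿ → [0,1] is measurable and G ~ N(0, σ²I). Then the function x ↦ Φ⁻¹(h(x)) is (1/σ)-Lipschitz with respect to the ℓ₂ norm, where Φ⁻¹ is the standard Gaussian quantile function. -/

import Mathlib

open MeasureTheory ProbabilityTheory Real Set Filter

/-- Standard normal CDF. -/
noncomputable def Phi (x : ℝ) : ℝ := ((gaussianReal 0 1) (Set.Iic x)).toReal

/-- Standard normal quantile function (inverse CDF). -/
noncomputable def PhiInv : ℝ → ℝ := Function.invFun Phi

/-- Gaussian measure `N(0, σ² I)` on `Fin n → ℝ`. -/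
noncomputable def gaussPi (n : ℕ) (σ : ℝ) : Measure (Fin n → ℝ) :=
  Measure.pi (fun _ => gaussianReal 0 ⟨σ ^ 2, sq_nonneg σ⟩)

/-- Euclidean (ℓ²) norm on `Fin n → ℝ`. -/
noncomputable def l2norm {n : ℕ} (v : Fin n → ℝ) : ℝ := Real.sqrt (∑ i, (v i) ^ 2)

/-- Upper `p`-quantile of a (law) measure on ℝ: `inf {y | P(X ≤ y) ≥ p}`. -/
noncomputable def upperQ (ν : Measure ℝ) (p : ℝ) : ℝ :=
  sInf {y : ℝ | p ≤ (ν (Set.Iic y)).toReal}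

/-- Lower `p`-quantile of a (law) measure on ℝ: `sup {y | P(X ≤ y) ≤ p}`. -/
noncomputable def lowerQ (ν : Measure ℝ) (p : ℝ) : ℝ :=
  sSup {y : ℝ | (ν (Set.Iic y)).toReal ≤ p}

/-- Law of `g (x + G)` with `G ~ N(0, σ² I)`. -/
noncomputable def smoothedLaw {n : ℕ} (σ : ℝ) (g : (Fin n → ℝ) → ℝ) (x : Fin n → ℝ) :
    Measure ℝ :=
  (gaussPi n σ).map (fun u => g (x + u))

open scoped ENNReal NNReal

/-
Fix `x, y` and put `v = x - y`. By the Cameron–Martin formula, `h x = E[f(y + G) L(G)]` with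
likelihood ratio `L u = exp((⟨v, u⟩ - |v|² / 2) / σ²)`, an increasing function of `⟨v, u⟩`.
By the Neyman–Pearson lemma, among `[0,1]`-valued `g` with `E g(G) = h y`, the quantity
`E[g(G) L(G)]` is largest for the indicator of a half-space `{⟨v, u⟩ ≥ s}`, and for it both
expectations are Gaussian tails: `h y = Φ(-s / (σ|v|))` and the weighted one is
`Φ(Φ⁻¹(h y) + |v| / σ)`. Hence `h x ≤ Φ(Φ⁻¹(h y) + |x - y| / σ)`; apply `Φ⁻¹` and swap `x, y`.
-/
lemma continuous_gaussianPDFReal (μ : ℝ) (v : ℝ≥0) : Continuous (gaussianPDFReal μ v) := by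
  unfold gaussianPDFReal; fun_prop

lemma Phi_eq_integral (x : ℝ) : Phi x = ∫ t in Iic x, gaussianPDFReal 0 1 t := by
  rw [Phi, gaussianReal_apply_eq_integral 0 one_ne_zero,
    ENNReal.toReal_ofReal (setIntegral_nonneg measurableSet_Iic fun t _ ↦ gaussianPDFReal_nonneg _ _ t)]

lemma hasDerivAt_Phi (x : ℝ) : HasDerivAt Phi (gaussianPDFReal 0 1 x) x := by
  have hint : ∀ a, IntegrableOn (gaussianPDFReal 0 1) (Iic a) := fun a ↦
    (integrable_gaussianPDFReal 0 1).integrableOn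
  have hPhi : Phi = fun x ↦ Phi 0 + ∫ t in (0)..x, gaussianPDFReal 0 1 t := by
    funext x
    rw [Phi_eq_integral, Phi_eq_integral, ← intervalIntegral.integral_Iic_sub_Iic (hint 0) (hint x)]
    ring
  rw [hPhi]
  exact ((continuous_gaussianPDFReal 0 1).integral_hasStrictDerivAt 0 x).hasDerivAt.const_add _

lemma Phi_strictMono : StrictMono Phi :=
  strictMono_of_hasDerivAt_pos hasDerivAt_Phi fun x ↦ gaussianPDFReal_pos 0 1 x one_ne_zero

lemma Phi_continuous : Continuous Phi :=
  continuous_iff_continuousAt.2 fun x ↦ (hasDerivAt_Phi x).continuousAt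

lemma Phi_eq_cdf : Phi = cdf (gaussianReal 0 1) := by
  funext x; rw [cdf_eq_real, measureReal_def, Phi]

lemma Phi_PhiInv {p : ℝ} (hp : p ∈ Ioo (0 : ℝ) 1) : Phi (PhiInv p) = p := by
  refine Function.invFun_eq (mem_range_of_exists_le_of_exists_ge Phi_continuous ?_ ?_)
  · rw [Phi_eq_cdf]; exact ((tendsto_cdf_atBot _).eventually (eventually_le_nhds hp.1)).exists
  · rw [Phi_eq_cdf]; exact ((tendsto_cdf_atTop _).eventually (eventually_ge_nhds hp.2)).exists

lemma PhiInv_le_of_le_Phi {p x : ℝ} (hp : p ∈ Ioo (0 : ℝ) 1) (h : p ≤ Phi x) : PhiInv p ≤ x :=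
  Phi_strictMono.le_iff_le.1 (by rwa [Phi_PhiInv hp])

lemma ofReal_Phi (x : ℝ) : ENNReal.ofReal (Phi x) = gaussianReal 0 1 (Iic x) :=
  ENNReal.ofReal_toReal (measure_ne_top _ _)

/-- Neyman–Pearson: pointwise `(1_B - F) (L - c) ≥ 0`, and `∫ (1_B - F) ≥ 0`. -/
theorem lintegral_mul_le_setLIntegral_of_threshold {α : Type*} [MeasurableSpace α]
    {μ : Measure α} {F L : α → ℝ≥0∞} {B : Set α} {c : ℝ≥0∞}
    (hF : Measurable F) (hB : MeasurableSet B) (hF1 : ∀ x, F x ≤ 1)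
    (hLB : ∀ x ∈ B, c ≤ L x) (hLBc : ∀ x ∉ B, L x ≤ c) (hc : c ≠ ∞) (hμB : μ B ≠ ∞)
    (hFB : ∫⁻ x, F x ∂μ ≤ μ B) :
    ∫⁻ x, L x * F x ∂μ ≤ ∫⁻ x in B, L x ∂μ := by
  have hpt : ∀ x, L x * F x + B.indicator (fun _ ↦ c) x ≤ B.indicator L x + c * F x := by
    intro x
    by_cases hx : x ∈ B
    · rw [indicator_of_mem hx, indicator_of_mem hx, ← tsub_add_cancel_of_le (hLB x hx), add_mul]
      calc (L x - c) * F x + c * F x + c ≤ (L x - c) * 1 + c * F x + c := by gcongr; exact hF1 x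
        _ = L x - c + c + c * F x := by ring
    · rw [indicator_of_notMem hx, indicator_of_notMem hx, add_zero, zero_add]
      gcongr
      exact hLBc x hx
  have hint := lintegral_mono (μ := μ) hpt
  rw [lintegral_add_right _ (measurable_const.indicator hB), lintegral_indicator_const hB,
    lintegral_add_right _ (hF.const_mul c), lintegral_const_mul _ hF, lintegral_indicator hB] at hint
  refine (ENNReal.add_le_add_iff_right (ENNReal.mul_ne_top hc hμB)).1 (hint.trans ?_)
  gcongr

lemma gaussianReal_map_const_add_eq_withDensity {v : ℝ≥0} (hv : v ≠ 0) (c : ℝ) :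
    (gaussianReal 0 v).map (c + ·)
      = (gaussianReal 0 v).withDensity fun a ↦ ENNReal.ofReal (exp ((c * a - c ^ 2 / 2) / v)) := by
  rw [gaussianReal_map_const_add, zero_add, gaussianReal_of_var_ne_zero _ hv,
    gaussianReal_of_var_ne_zero _ hv, ← withDensity_mul _ (measurable_gaussianPDF _ _)
      (by fun_prop)]
  congr 1
  funext a
  rw [Pi.mul_apply, gaussianPDF, gaussianPDF, ← ENNReal.ofReal_mul (gaussianPDFReal_nonneg _ _ _)]
  simp only [gaussianPDFReal, mul_assoc, ← exp_add]
  congr 3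
  field_simp
  ring

theorem MeasureTheory.Measure.pi_withDensity {ι : Type*} [Fintype ι] {α : ι → Type*}
    [∀ i, MeasurableSpace (α i)] (μ : ∀ i, Measure (α i)) [∀ i, IsProbabilityMeasure (μ i)]
    {g : ∀ i, α i → ℝ≥0∞} (hg : ∀ i, Measurable (g i))
    [∀ i, SigmaFinite ((μ i).withDensity (g i))] :
    Measure.pi (fun i ↦ (μ i).withDensity (g i))
      = (Measure.pi μ).withDensity fun x ↦ ∏ i, g i (x i) := by
  refine Measure.pi_eq fun s hs ↦ ?_
  have hind : (univ.pi s).indicator (fun x ↦ ∏ i, g i (x i))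
      = fun x ↦ ∏ i, (s i).indicator (g i) (x i) := by
    funext x
    by_cases hx : x ∈ univ.pi s
    · simp [indicator_of_mem hx, indicator_of_mem (hx _ (mem_univ _))]
    · obtain ⟨i, -, hi⟩ := not_forall₂.1 hx
      rw [indicator_of_notMem hx]
      exact (Finset.prod_eq_zero (Finset.mem_univ i) (indicator_of_notMem hi _)).symm
  rw [withDensity_apply _ (MeasurableSet.univ_pi hs), ← lintegral_indicator (MeasurableSet.univ_pi hs),
    hind, lintegral_prod_eq_prod_lintegral_of_indepFun _ _
      (iIndepFun_pi fun i ↦ ((hg i).indicator (hs i)).aemeasurable)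
      fun i ↦ ((hg i).indicator (hs i)).comp (measurable_pi_apply i)]
  refine Finset.prod_congr rfl fun i _ ↦ ?_
  rw [(measurePreserving_eval μ i).lintegral_comp ((hg i).indicator (hs i)),
    lintegral_indicator (hs i), withDensity_apply _ (hs i)]

lemma dotProduct_self_nonneg {ι : Type*} [Fintype ι] (v : ι → ℝ) : 0 ≤ v ⬝ᵥ v :=
  Finset.sum_nonneg fun i _ ↦ mul_self_nonneg (v i)

lemma dotProduct_self_pos {ι : Type*} [Fintype ι] {v : ι → ℝ} (hv : v ≠ 0) : 0 < v ⬝ᵥ v := by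
  simpa using Matrix.dotProduct_self_star_pos_iff.2 hv

theorem pi_gaussianReal_map_dotProduct {ι : Type*} [Fintype ι] (V : ℝ≥0) (c : ι → ℝ) :
    (Measure.pi fun _ : ι ↦ gaussianReal 0 V).map (c ⬝ᵥ ·)
      = gaussianReal 0 ((c ⬝ᵥ c).toNNReal * V) := by
  have hc : (c ⬝ᵥ ·) = (fun p : ι → ℝ ↦ ∑ i, p i) ∘ fun u i ↦ c i * u i := rfl
  have (i : ι) : IsProbabilityMeasure ((gaussianReal 0 V).map (c i * ·)) :=
    Measure.isProbabilityMeasure_map (by fun_prop)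
  rw [hc, ← Measure.map_map (by fun_prop) (by fun_prop), Measure.pi_map_pi fun i ↦ by fun_prop]
  refine Measure.ext_of_charFun (funext fun t ↦ ?_)
  rw [charFun_map_sum_pi_eq_prod, Finset.prod_apply]
  simp only [gaussianReal_map_const_mul, charFun_gaussianReal, ← Complex.exp_sum]
  congr 1
  rw [NNReal.coe_mul, Real.coe_toNNReal _ (dotProduct_self_nonneg c)]
  simp only [dotProduct]
  push_cast
  simp only [mul_zero, zero_mul, zero_sub, Finset.sum_neg_distrib, Finset.sum_div,
    Finset.sum_mul, sq]

theorem pi_gaussianReal_map_const_add {ι : Type*} [Fintype ι] {V : ℝ≥0} (hV : V ≠ 0)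
    (v : ι → ℝ) :
    (Measure.pi fun _ : ι ↦ gaussianReal 0 V).map (v + ·)
      = (Measure.pi fun _ : ι ↦ gaussianReal 0 V).withDensity
          fun u ↦ ENNReal.ofReal (exp ((v ⬝ᵥ u - v ⬝ᵥ v / 2) / V)) := by
  set E : ι → ℝ → ℝ≥0∞ := fun i a ↦ ENNReal.ofReal (exp ((v i * a - v i ^ 2 / 2) / V))
  have hmap (i : ι) : (gaussianReal 0 V).map (v i + ·) = (gaussianReal 0 V).withDensity (E i) :=
    gaussianReal_map_const_add_eq_withDensity hV (v i)
  have (i : ι) : IsProbabilityMeasure ((gaussianReal 0 V).map (v i + ·)) :=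
    Measure.isProbabilityMeasure_map (by fun_prop)
  have (i : ι) : SigmaFinite ((gaussianReal 0 V).withDensity (E i)) := by
    rw [← hmap]; infer_instance
  rw [show (v + ·) = fun (u : ι → ℝ) i ↦ v i + u i from rfl,
    Measure.pi_map_pi fun i ↦ by fun_prop, funext hmap, Measure.pi_withDensity _ fun i ↦ by fun_prop]
  congr 1
  funext u
  rw [← ENNReal.ofReal_prod_of_nonneg fun i _ ↦ (exp_pos _).le, ← exp_sum, ← Finset.sum_div,
    Finset.sum_sub_distrib, ← Finset.sum_div]
  simp only [dotProduct, sq]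

theorem pi_gaussianReal_setOf_le_dotProduct {ι : Type*} [Fintype ι] {V : ℝ≥0} (hV : V ≠ 0)
    {v : ι → ℝ} (hv : v ≠ 0) (s : ℝ) :
    (Measure.pi fun _ : ι ↦ gaussianReal 0 V) {u | s ≤ v ⬝ᵥ u}
      = ENNReal.ofReal (Phi (-s / (√(v ⬝ᵥ v) * √V))) := by
  set k := √(v ⬝ᵥ v) * √V
  have hk : 0 < k := mul_pos (sqrt_pos.2 (dotProduct_self_pos hv)) (sqrt_pos.2 (by positivity))
  have hset : {u | s ≤ v ⬝ᵥ u} = ((-k⁻¹) • v ⬝ᵥ ·) ⁻¹' Iic (-s / k) := by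
    ext u
    simp only [mem_ofPred_eq, mem_preimage, mem_Iic, smul_dotProduct, smul_eq_mul]
    rw [neg_mul, neg_div, neg_le_neg_iff, ← div_eq_inv_mul, div_le_div_iff_of_pos_right hk]
  have hvar : ((-k⁻¹) • v ⬝ᵥ (-k⁻¹) • v).toNNReal * V = 1 := by
    have hk2 : k ^ 2 = v ⬝ᵥ v * V := by
      rw [mul_pow, sq_sqrt (dotProduct_self_nonneg v), sq_sqrt V.coe_nonneg]
    apply NNReal.eq
    rw [NNReal.coe_mul, Real.coe_toNNReal _ (dotProduct_self_nonneg _), smul_dotProduct,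
      dotProduct_smul, smul_eq_mul, smul_eq_mul, NNReal.coe_one]
    field_simp
    linarith
  rw [hset, ← Measure.map_apply (by fun_prop) measurableSet_Iic, pi_gaussianReal_map_dotProduct,
    hvar, ofReal_Phi]

theorem pi_gaussianReal_lintegral_comp_const_add_le_Phi {ι : Type*} [Fintype ι] {V : ℝ≥0}
    (hV : V ≠ 0) {F : (ι → ℝ) → ℝ≥0∞} (hF : Measurable F) (hF1 : ∀ u, F u ≤ 1) {p : ℝ}
    (hp : p ∈ Ioo (0 : ℝ) 1)
    (hFp : ∫⁻ u, F u ∂(Measure.pi fun _ : ι ↦ gaussianReal 0 V) = ENNReal.ofReal p)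
    (v : ι → ℝ) :
    ∫⁻ u, F (v + u) ∂(Measure.pi fun _ : ι ↦ gaussianReal 0 V)
      ≤ ENNReal.ofReal (Phi (PhiInv p + √(v ⬝ᵥ v) / √V)) := by
  rcases eq_or_ne v 0 with rfl | hv
  · simp [Phi_PhiInv hp, hFp]
  set γ := Measure.pi fun _ : ι ↦ gaussianReal 0 V
  set k := √(v ⬝ᵥ v) * √V
  have hk : 0 < k := mul_pos (sqrt_pos.2 (dotProduct_self_pos hv)) (sqrt_pos.2 (by positivity))
  set s := -(k * PhiInv p)
  set B := {u | s ≤ v ⬝ᵥ u}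
  have hBmeas : MeasurableSet B := measurableSet_le measurable_const (by fun_prop)
  set L : (ι → ℝ) → ℝ≥0∞ := fun u ↦ ENNReal.ofReal (exp ((v ⬝ᵥ u - v ⬝ᵥ v / 2) / V))
  have hL_mono : Monotone fun t : ℝ ↦ ENNReal.ofReal (exp ((t - v ⬝ᵥ v / 2) / V)) :=
    fun a b hab ↦ by beta_reduce; gcongr
  have hγB : γ B = ENNReal.ofReal p := by
    rw [pi_gaussianReal_setOf_le_dotProduct hV hv, neg_neg, mul_div_cancel_left₀ _ hk.ne',
      Phi_PhiInv hp]
  calc ∫⁻ u, F (v + u) ∂γ = ∫⁻ u, L u * F u ∂γ := by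
        rw [← lintegral_map hF (measurable_const_add v), pi_gaussianReal_map_const_add hV,
          lintegral_withDensity_eq_lintegral_mul _ (by fun_prop) hF]
        rfl
    _ ≤ ∫⁻ u in B, L u ∂γ :=
        lintegral_mul_le_setLIntegral_of_threshold hF hBmeas hF1 (fun u hu ↦ hL_mono hu)
          (fun u hu ↦ hL_mono (not_le.1 hu).le) ENNReal.ofReal_ne_top (measure_ne_top _ _)
          (hFp.trans hγB.symm).le
    _ = γ.map (v + ·) B := by
        rw [pi_gaussianReal_map_const_add hV, withDensity_apply _ hBmeas]
    _ = γ {u | s - v ⬝ᵥ v ≤ v ⬝ᵥ u} := by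
        rw [Measure.map_apply (measurable_const_add v) hBmeas]
        congr 1
        ext u
        simp only [B, mem_preimage, mem_ofPred_eq, dotProduct_add, sub_le_iff_le_add']
    _ = ENNReal.ofReal (Phi (PhiInv p + √(v ⬝ᵥ v) / √V)) := by
        rw [pi_gaussianReal_setOf_le_dotProduct hV hv]
        congr 2
        have hvv : √(v ⬝ᵥ v) ^ 2 = v ⬝ᵥ v := sq_sqrt (dotProduct_self_pos hv).le
        rw [div_eq_iff hk.ne']
        simp only [s, k]
        field_simp
        linear_combination -hvv

lemma l2norm_eq_sqrt_dotProduct {n : ℕ} (v : Fin n → ℝ) : l2norm v = √(v ⬝ᵥ v) := by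
  simp only [l2norm, dotProduct, sq]

lemma l2norm_sub_comm {n : ℕ} (x y : Fin n → ℝ) : l2norm (x - y) = l2norm (y - x) := by
  simp only [l2norm, Pi.sub_apply, ← neg_sub (y _) (x _), neg_sq]

theorem integral_gaussPi_comp_add_le_Phi {n : ℕ} {σ : ℝ} (hσ : 0 < σ)
    {g : (Fin n → ℝ) → ℝ} (hg : Measurable g) (hg01 : ∀ z, g z ∈ Icc (0 : ℝ) 1)
    (hp : ∫ u, g u ∂(gaussPi n σ) ∈ Ioo (0 : ℝ) 1) (v : Fin n → ℝ) :
    ∫ u, g (v + u) ∂(gaussPi n σ) ≤ Phi (PhiInv (∫ u, g u ∂(gaussPi n σ)) + l2norm v / σ) := by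
  obtain ⟨V, hVσ, hγ⟩ : ∃ V : ℝ≥0, (V : ℝ) = σ ^ 2 ∧
      gaussPi n σ = Measure.pi fun _ ↦ gaussianReal 0 V := ⟨_, rfl, rfl⟩
  have hV : V ≠ 0 := by
    rw [← NNReal.coe_ne_zero, hVσ]; positivity
  have hofReal (G : (Fin n → ℝ) → ℝ) (hG : Measurable G) (hG01 : ∀ z, G z ∈ Icc (0 : ℝ) 1) :
      ENNReal.ofReal (∫ u, G u ∂(gaussPi n σ)) = ∫⁻ u, ENNReal.ofReal (G u) ∂(gaussPi n σ) := by
    rw [hγ]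
    refine ofReal_integral_eq_lintegral_ofReal ?_ (ae_of_all _ fun u ↦ (hG01 u).1)
    refine Integrable.of_bound hG.aestronglyMeasurable 1 (ae_of_all _ fun u ↦ ?_)
    rw [Real.norm_of_nonneg (hG01 u).1]
    exact (hG01 u).2
  have hshift := pi_gaussianReal_lintegral_comp_const_add_le_Phi hV (F := fun u ↦ ENNReal.ofReal (g u))
    (by fun_prop) (fun u ↦ ENNReal.ofReal_le_one.2 (hg01 u).2) hp (by rw [hofReal g hg hg01, hγ]) v
  rw [← hγ, ← hofReal (fun u ↦ g (v + u)) (hg.comp (measurable_const_add v)) fun u ↦ hg01 _, hVσ,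
    sqrt_sq hσ.le, ← l2norm_eq_sqrt_dotProduct] at hshift
  exact (ENNReal.ofReal_le_ofReal_iff ENNReal.toReal_nonneg).1 hshift

/-- If `h(x) = E[f(x+G)]` with `f : ℝⁿ → [0,1]` measurable and
`G ~ N(0, σ² I)`, then `x ↦ Φ⁻¹(h x)` is `(1/σ)`-Lipschitz for the ℓ² norm. -/
theorem stmt_1 {n : ℕ} (σ : ℝ) (hσ : 0 < σ) (f : (Fin n → ℝ) → ℝ) (hf : Measurable f)
    (hf01 : ∀ z, f z ∈ Set.Icc (0:ℝ) 1)
    (h : (Fin n → ℝ) → ℝ) (hh : ∀ x, h x = ∫ u, f (x + u) ∂(gaussPi n σ))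
    (hh01 : ∀ x, h x ∈ Set.Ioo (0:ℝ) 1) :
    ∀ x y : Fin n → ℝ, |PhiInv (h x) - PhiInv (h y)| ≤ (1 / σ) * l2norm (x - y) := by
  have key (x y : Fin n → ℝ) : h x ≤ Phi (PhiInv (h y) + l2norm (x - y) / σ) := by
    have hshift := integral_gaussPi_comp_add_le_Phi (g := fun u ↦ f (y + u)) hσ (by fun_prop)
      (fun u ↦ hf01 _) (hh y ▸ hh01 y) (x - y)
    simp only [← add_assoc, add_sub_cancel, ← hh] at hshift
    exact hshift
  intro x y
  rw [abs_sub_le_iff, one_div_mul_eq_div]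
  constructor
  · linarith [PhiInv_le_of_le_Phi (hh01 x) (key x y)]
  · linarith [PhiInv_le_of_le_Phi (hh01 y) (l2norm_sub_comm x y ▸ key y x)]
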